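/- arXiv:2005.05543 — 3 statements merged into one kernel-verified Lean document; each statement's English description precedes it below -/
import Mathlib

section
/- Let (G, E, φ) be a self-similar graph with quotient graph Ẽ. Then every G-circuit in E has an entry if and only if every circuit in Ẽ has an entry. Here a path γ in E has an entry if |r⁻¹(r(γᵢ))| > 1 for some i, and similarly for Ẽ. -/
/-!
Since `G` acts by graph automorphisms, edges in one `G`-orbit have fibres `r⁻¹(r e)` of the same
size, so whether a path has an entry depends only on its sequence of edge orbits. A circuit of `Ẽ`
lifts edge by edge to a `G`-circuit of `E` with the same orbit sequence (translate each edge so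
that it starts where the previous one ends), and translating each edge of a `G`-circuit so that
its range lies in `Ω` gives a circuit of `Ẽ` with the same orbit sequence.
-/

open MulAction

theorem List.apply_head_eq_of_map_eq {α β : Type*} {f : α → β} {l m : List α}
    (h : l.map f = m.map f) (hl : l ≠ []) (hm : m ≠ []) : f (l.head hl) = f (m.head hm) := by
  rw [← List.head_map (f := f) (by simpa), ← List.head_map (f := f) (by simpa)]
  simp_rw [h]

theorem List.apply_getLast_eq_of_map_eq {α β : Type*} {f : α → β} {l m : List α}
    (h : l.map f = m.map f) (hl : l ≠ []) (hm : m ≠ []) :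
    f (l.getLast hl) = f (m.getLast hm) := by
  rw [← List.getLast_map (f := f) (by simpa), ← List.getLast_map (f := f) (by simpa)]
  exact List.getLast_congr _ _ h

section SelfSimilarGraph

variable {G E V : Type*}

def HasEntry (r : E → V) (γ : List E) : Prop :=
  ∃ e ∈ γ, (r ⁻¹' {r e}).Nontrivial

theorem hasEntry_iff_exists_get {r : E → V} {γ : List E} :
    HasEntry r γ ↔
      ∃ i : Fin γ.length, ∃ e f : E, e ≠ f ∧ r e = r (γ.get i) ∧ r f = r (γ.get i) := by
  simp only [HasEntry, List.mem_iff_get, Set.Nontrivial, Set.mem_preimage,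
    Set.mem_singleton_iff]
  constructor
  · rintro ⟨_, ⟨i, rfl⟩, e, he, f, hf, hef⟩
    exact ⟨i, e, f, hef, he, hf⟩
  · rintro ⟨i, e, f, hef, he, hf⟩
    exact ⟨_, ⟨i, rfl⟩, e, he, f, hf, hef⟩

variable [Group G] [MulAction G E] [MulAction G V] {r d : E → V}

theorem nontrivial_fiber_smul_iff (hr : ∀ (g : G) e, r (g • e) = g • r e) (g : G) (e : E) :
    (r ⁻¹' {r (g • e)}).Nontrivial ↔ (r ⁻¹' {r e}).Nontrivial := by
  have key : ∀ (g : G) v, (r ⁻¹' {v}).Nontrivial → (r ⁻¹' {g • v}).Nontrivial :=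
    fun g v h => (h.image (MulAction.injective g)).mono <| by
      rintro _ ⟨e, he, rfl⟩
      exact (hr g e).trans (congrArg (g • ·) he)
  rw [hr]
  exact ⟨fun h => by simpa using key g⁻¹ _ h, key g _⟩

theorem orbit_apply_eq_of_orbit_eq {f : E → V} (hf : ∀ (g : G) e, f (g • e) = g • f e) {a b : E}
    (h : orbit G a = orbit G b) : orbit G (f a) = orbit G (f b) := by
  obtain ⟨g, rfl⟩ := orbit_eq_iff.1 h
  rw [hf, orbit_smul]

theorem hasEntry_congr_of_map_orbit_eq (hr : ∀ (g : G) e, r (g • e) = g • r e)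
    {α γ : List E} (h : α.map (orbit G) = γ.map (orbit G)) :
    HasEntry r α ↔ HasEntry r γ := by
  suffices ∀ α γ : List E, α.map (orbit G) = γ.map (orbit G) → HasEntry r α → HasEntry r γ from
    ⟨this α γ h, this γ α h.symm⟩
  rintro α γ h ⟨a, ha, hentry⟩
  obtain ⟨c, hc, hca⟩ := List.mem_map.1 (h ▸ List.mem_map_of_mem ha : orbit G a ∈ γ.map (orbit G))
  obtain ⟨g, rfl⟩ := orbit_eq_iff.1 hca.symm
  exact ⟨c, hc, (nontrivial_fiber_smul_iff hr g c).1 hentry⟩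

theorem exists_path_lift (hr : ∀ (g : G) e, r (g • e) = g • r e)
    (hd : ∀ (g : G) e, d (g • e) = g • d e) {α : List E}
    (hα : α.IsChain fun e f => r f ∈ orbit G (d e)) :
    ∃ γ : List E, γ.map (orbit G) = α.map (orbit G) ∧ γ.IsChain fun e f => d e = r f := by
  induction hα with
  | nil => exact ⟨[], rfl, .nil⟩
  | singleton a => exact ⟨[a], rfl, .singleton a⟩
  | @cons_cons a b l hab _ ih =>
    obtain ⟨_ | ⟨b', l'⟩, hmap, hchain⟩ := ih
    · simp at hmap
    obtain ⟨hb', hl'⟩ := List.cons_eq_cons.1 hmap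
    obtain ⟨g, rfl⟩ := orbit_eq_iff.1 hb'
    obtain ⟨k, hk⟩ := mem_orbit_iff.1 hab
    refine ⟨(g * k) • a :: g • b :: l', ?_, .cons_cons ?_ hchain⟩
    · simp only [List.map_cons, orbit_smul, hl']
    · rw [hd, hr, ← hk, mul_smul]

variable (G) in
def IsGCircuit (r d : E → V) (γ : List E) : Prop :=
  ∃ hne : γ ≠ [], (γ.IsChain fun e f => d e = r f) ∧ d (γ.getLast hne) ∈ orbit G (r (γ.head hne))

/-- A circuit of the quotient graph `Ẽ`, each edge `ẽ` being given by its lift `e` with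
`r e ∈ Ω`; `ẽ` is followed by `f̃` when `r f` is the representative of `d e`. -/
def IsQuotientCircuit (Ω : Set V) (rep : V → V) (r d : E → V) (α : List E) : Prop :=
  ∃ hne : α ≠ [], (∀ e ∈ α, r e ∈ Ω) ∧ (α.IsChain fun e f => rep (d e) = r f) ∧
    rep (d (α.getLast hne)) = r (α.head hne)

theorem rep_smul {Ω : Set V} {rep : V → V} (hrepΩ : ∀ v, rep v ∈ Ω)
    (hrep_mem : ∀ v, rep v ∈ orbit G v)
    (hrep_unique : ∀ v w, w ∈ Ω → w ∈ orbit G v → rep v = w) (g : G) (v : V) :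
    rep (g • v) = rep v :=
  hrep_unique _ _ (hrepΩ v) (by rw [orbit_smul]; exact hrep_mem v)

variable {Ω : Set V} {rep : V → V}

theorem IsQuotientCircuit.exists_isGCircuit (hr : ∀ (g : G) e, r (g • e) = g • r e)
    (hd : ∀ (g : G) e, d (g • e) = g • d e) (hrep_mem : ∀ v, rep v ∈ orbit G v) {α : List E}
    (hα : IsQuotientCircuit Ω rep r d α) :
    ∃ γ, IsGCircuit G r d γ ∧ γ.map (orbit G) = α.map (orbit G) := by
  obtain ⟨hne, -, hchain, hcirc⟩ := hα
  obtain ⟨γ, hmap, hγ⟩ := exists_path_lift hr hd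
    (hchain.imp fun e f (h : rep (d e) = r f) => h ▸ hrep_mem (d e))
  have hγne : γ ≠ [] := by rintro rfl; exact hne (List.map_eq_nil_iff.1 hmap.symm)
  refine ⟨γ, ⟨hγne, hγ, orbit_eq_iff.1 ?_⟩, hmap⟩
  rw [orbit_apply_eq_of_orbit_eq hd (List.apply_getLast_eq_of_map_eq hmap hγne hne),
    orbit_apply_eq_of_orbit_eq hr (List.apply_head_eq_of_map_eq hmap hγne hne), ← hcirc,
    orbit_eq_iff.2 (hrep_mem _)]

theorem IsGCircuit.exists_isQuotientCircuit (hr : ∀ (g : G) e, r (g • e) = g • r e)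
    (hd : ∀ (g : G) e, d (g • e) = g • d e) (hrepΩ : ∀ v, rep v ∈ Ω)
    (hrep_mem : ∀ v, rep v ∈ orbit G v) (hrep_smul : ∀ (g : G) v, rep (g • v) = rep v)
    {γ : List E} (hγ : IsGCircuit G r d γ) :
    ∃ α, IsQuotientCircuit Ω rep r d α ∧ α.map (orbit G) = γ.map (orbit G) := by
  obtain ⟨hne, hchain, hcirc⟩ := hγ
  choose g hg using fun e => mem_orbit_iff.1 (hrep_mem (r e))
  have hr_move : ∀ e, r (g e • e) = rep (r e) := fun e => by rw [hr, hg]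
  have hd_move : ∀ e, rep (d (g e • e)) = rep (d e) := fun e => by rw [hd, hrep_smul]
  have hαne : γ.map (fun e => g e • e) ≠ [] := by simpa
  obtain ⟨k, hk⟩ := mem_orbit_iff.1 hcirc
  refine ⟨γ.map fun e => g e • e, ⟨hαne, ?_, ?_, ?_⟩, ?_⟩
  · simp only [List.forall_mem_map, hr_move, hrepΩ, implies_true]
  · exact (List.isChain_map _).2 (hchain.imp fun e f h => by rw [hd_move, hr_move, h])
  · rw [List.getLast_map, List.head_map, hd_move, hr_move, ← hk, hrep_smul]
  · simp only [List.map_map, Function.comp_def, orbit_smul]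

theorem forall_isGCircuit_hasEntry_iff (hr : ∀ (g : G) e, r (g • e) = g • r e)
    (hd : ∀ (g : G) e, d (g • e) = g • d e) (hrepΩ : ∀ v, rep v ∈ Ω)
    (hrep_mem : ∀ v, rep v ∈ orbit G v) (hrep_smul : ∀ (g : G) v, rep (g • v) = rep v) :
    (∀ γ, IsGCircuit G r d γ → HasEntry r γ) ↔
      (∀ α, IsQuotientCircuit Ω rep r d α → HasEntry r α) := by
  constructor
  · intro H α hα
    obtain ⟨γ, hγ, hmap⟩ := hα.exists_isGCircuit hr hd hrep_mem
    exact (hasEntry_congr_of_map_orbit_eq hr hmap).1 (H γ hγ)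
  · intro H γ hγ
    obtain ⟨α, hα, hmap⟩ := hγ.exists_isQuotientCircuit hr hd hrepΩ hrep_mem hrep_smul
    exact (hasEntry_congr_of_map_orbit_eq hr hmap).1 (H α hα)

end SelfSimilarGraph

/-- every `G`-circuit in `E` has an entry iff every circuit in
the quotient graph `Ẽ` has an entry (an entry meaning that some vertex along
the circuit receives more than one edge). -/
theorem GCircuit_entry_iff_quotient_circuit_entry {G E V : Type*} [Group G]
    (r d : E → V) (aE : G → E → E) (aV : G → V → V)
    (haE_one : ∀ e, aE 1 e = e)
    (haE_mul : ∀ g h e, aE (g * h) e = aE g (aE h e))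
    (haV_one : ∀ v, aV 1 v = v)
    (haV_mul : ∀ g h v, aV (g * h) v = aV g (aV h v))
    (hr : ∀ g e, r (aE g e) = aV g (r e))
    (hd : ∀ g e, d (aE g e) = aV g (d e))
    (Ω : Set V) (rep : V → V)
    (hrepΩ : ∀ v, rep v ∈ Ω)
    (hrep_orbit : ∀ v, ∃ g : G, rep v = aV g v)
    (hrep_unique : ∀ v w, w ∈ Ω → (∃ g : G, w = aV g v) → rep v = w) :
    -- every `G`-circuit in `E` has an entry ...
    (∀ (γ : List E) (hne : γ ≠ []),
        List.Chain' (fun e f => d e = r f) γ →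
        (∃ g : G, d (γ.getLast hne) = aV g (r (γ.head hne))) →
        ∃ i : Fin γ.length, ∃ e f : E, e ≠ f ∧ r e = r (γ.get i) ∧ r f = r (γ.get i)) ↔
    -- ... iff every circuit in `Ẽ` has an entry:
    (∀ (α : List E) (hne : α ≠ []),
        (∀ e ∈ α, r e ∈ Ω) →
        List.Chain' (fun e f => rep (d e) = r f) α →
        rep (d (α.getLast hne)) = r (α.head hne) →
        ∃ i : Fin α.length, ∃ e f : E, e ≠ f ∧ r e = r (α.get i) ∧ r f = r (α.get i)) := by
  let : MulAction G E := { smul := aE, one_smul := haE_one, mul_smul := haE_mul }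
  let : MulAction G V := { smul := aV, one_smul := haV_one, mul_smul := haV_mul }
  have hrep_mem : ∀ v, rep v ∈ orbit G v := fun v =>
    let ⟨g, hg⟩ := hrep_orbit v; ⟨g, hg.symm⟩
  have hrep_smul : ∀ (g : G) v, rep (g • v) = rep v :=
    rep_smul hrepΩ hrep_mem fun v w hw ⟨g, hg⟩ => hrep_unique v w hw ⟨g, hg.symm⟩
  have key := forall_isGCircuit_hasEntry_iff (G := G) hr hd hrepΩ hrep_mem hrep_smul
  simp only [IsGCircuit, IsQuotientCircuit, hasEntry_iff_exists_get, forall_exists_index,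
    and_imp, mem_orbit_iff, eq_comm (b := d _)] at key ⊢
  exact key
end

section
/- Let (G, E, φ) be a self-similar graph with quotient graph Ẽ. If T : Ẽ⁰ → ℝ≥0 is a nonzero graph trace on Ẽ, then T' : E⁰ → ℝ≥0 defined by T'(v) := T([v]) is a nonzero graph G-trace on E; that is, T' satisfies T'(r(e)) ≥ T'(d(e)) for every edge e, T'(v) = Σ_{r(e)=v} T'(d(e)) for every vertex v receiving finitely many (and at least one) edges, and T'(v) = T'(w) whenever v and w lie in the same G-orbit. -/
open scoped NNReal

/-- if `T` is a nonzero graph trace on the quotient graph `Ẽ`,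
then `T'(v) := T([v])` is a nonzero graph `G`-trace on `E`. -/
theorem quotient_trace_pullback {G E V : Type*} [Group G]
    (r d : E → V) (aE : G → E → E) (aV : G → V → V)
    (haE_one : ∀ e, aE 1 e = e)
    (haE_mul : ∀ g h e, aE (g * h) e = aE g (aE h e))
    (haV_one : ∀ v, aV 1 v = v)
    (haV_mul : ∀ g h v, aV (g * h) v = aV g (aV h v))
    (hr : ∀ g e, r (aE g e) = aV g (r e))
    (hd : ∀ g e, d (aE g e) = aV g (d e))
    (Ω : Set V) (rep : V → V)
    (hrepΩ : ∀ v, rep v ∈ Ω)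
    (hrep_orbit : ∀ v, ∃ g : G, rep v = aV g v)
    (hrep_unique : ∀ v w, w ∈ Ω → (∃ g : G, w = aV g v) → rep v = w)
    -- `E` is row-finite:
    (hfin : ∀ v : V, {e : E | r e = v}.Finite)
    -- `T` is a nonzero graph trace on `Ẽ` (vertices of `Ẽ` being `[v] = rep v`
    -- for `v ∈ Ω`; edges of `Ẽ` with range `[w]`, `w ∈ Ω`, being the edges `e`
    -- of `E` with `r e = w`, with domain `[d e] = rep (d e)`):
    (T : V → ℝ≥0)
    (hT1 : ∀ e : E, r e ∈ Ω → T (rep (d e)) ≤ T (r e))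
    (hT2 : ∀ w ∈ Ω, {e : E | r e = w}.Nonempty →
        T w = ∑ e ∈ (hfin w).toFinset, T (rep (d e)))
    (hTnz : ∃ w ∈ Ω, T w ≠ 0) :
    -- then `T' := T ∘ rep` is a nonzero graph `G`-trace on `E`:
    (∀ e : E, T (rep (d e)) ≤ T (rep (r e))) ∧
    (∀ v : V, {e : E | r e = v}.Nonempty →
        T (rep v) = ∑ e ∈ (hfin v).toFinset, T (rep (d e))) ∧
    (∀ (v : V) (g : G), T (rep (aV g v)) = T (rep v)) ∧
    (∃ v : V, T (rep v) ≠ 0) := by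

  -- basic facts
  have hinv : ∀ (v : V) (g : G), rep (aV g v) = rep v := by
    intro v g
    obtain ⟨h, hh⟩ := hrep_orbit v
    refine hrep_unique (aV g v) (rep v) (hrepΩ v) ⟨h * g⁻¹, ?_⟩
    rw [← haV_mul, mul_assoc, inv_mul_cancel, mul_one]; exact hh
  have hfix : ∀ w ∈ Ω, rep w = w := by
    intro w hw
    exact hrep_unique w w hw ⟨1, (haV_one w).symm⟩
  have hrr : ∀ v, rep (rep v) = rep v := by
    intro v
    exact hfix _ (hrepΩ v)
  refine ⟨?_, ?_, fun v g => by rw [hinv], ?_⟩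
  · intro e
    obtain ⟨g, hg⟩ := hrep_orbit (r e)
    have h1 := hT1 (aE g e) (by rw [hr, ← hg]; exact hrepΩ _)
    rw [hd, hinv, hr, ← hg] at h1
    exact h1
  · intro v hne
    obtain ⟨g, hg⟩ := hrep_orbit v
    have hne' : {e : E | r e = rep v}.Nonempty := by
      obtain ⟨e, he⟩ := hne
      exact ⟨aE g e, by simp only [Set.mem_setOf_eq] at he ⊢; rw [hr, he, hg]⟩
    rw [hT2 (rep v) (hrepΩ v) hne']
    refine (Finset.sum_bij (fun e _ => aE g e) ?_ ?_ ?_ ?_).symm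
    · intro e he
      simp only [Set.Finite.mem_toFinset, Set.mem_setOf_eq] at he ⊢
      rw [hr, he, hg]
    · intro e1 h1 e2 h2 heq
      have : aE g⁻¹ (aE g e1) = aE g⁻¹ (aE g e2) := congrArg (aE g⁻¹) heq
      rwa [← haE_mul, ← haE_mul, inv_mul_cancel, haE_one, haE_one] at this
    · intro e he
      simp only [Set.Finite.mem_toFinset, Set.mem_setOf_eq] at he ⊢
      refine ⟨aE g⁻¹ e, ?_, ?_⟩
      · simp only [Set.Finite.mem_toFinset, Set.mem_setOf_eq, hr, he, hg,
          ← haV_mul, inv_mul_cancel, haV_one]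
      · rw [← haE_mul, mul_inv_cancel, haE_one]
    · intro e he
      rw [hd, hinv]
  · obtain ⟨w, hw, hTw⟩ := hTnz
    exact ⟨w, by rwa [hfix w hw]⟩
end

section
/- Let F be a finite directed graph (finitely many vertices and edges) with no circuits. Then F admits a nonzero graph trace, i.e., a function T : F⁰ → ℝ≥0, not identically zero, such that T(r(e)) ≥ T(d(e)) for every edge e and T(v) = Σ_{e ∈ r⁻¹(v)} T(d(e)) for every vertex v with r⁻¹(v) nonempty. -/
/-!
Orient the graph by `d e → r e`. Having no circuits makes this relation well-founded on the
finite vertex set, so we may define `T` by well-founded recursion: `T v = 1` at a vertex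
receiving no edge, and `T v = ∑_{r e = v} T (d e)` otherwise. Then `T ≥ 1` everywhere, and
`T (d e) ≤ T (r e)` since `T (d e)` is one of the summands of `T (r e)`.
-/

open scoped NNReal

section

variable {E V : Type*} (r d : E → V)

def IsEdge (a b : V) : Prop := ∃ e, d e = a ∧ r e = b

variable {r d}

theorem exists_path_of_transGen_isEdge {a b : V} (h : Relation.TransGen (IsEdge r d) a b) :
    ∃ (γ : List E) (hne : γ ≠ []), List.IsChain (fun e f => d e = r f) γ ∧
      r (γ.head hne) = b ∧ d (γ.getLast hne) = a := by
  induction h with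
  | single h =>
    obtain ⟨e, rfl, rfl⟩ := h
    exact ⟨[e], List.cons_ne_nil _ _, List.isChain_singleton _, rfl, rfl⟩
  | tail _ h ih =>
    obtain ⟨e, he_src, rfl⟩ := h
    obtain ⟨γ, hne, hchain, hhead, hlast⟩ := ih
    refine ⟨e :: γ, List.cons_ne_nil _ _, ?_, rfl, by rwa [List.getLast_cons hne]⟩
    rw [List.isChain_cons]
    refine ⟨fun f hf => ?_, hchain⟩
    rw [List.head?_eq_some_head hne, Option.mem_some_iff] at hf
    rw [← hf, he_src, hhead]

theorem wellFounded_isEdge [Finite V]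
    (hnocirc : ¬ ∃ (γ : List E) (hne : γ ≠ []),
        List.IsChain (fun e f => d e = r f) γ ∧ d (γ.getLast hne) = r (γ.head hne)) :
    WellFounded (IsEdge r d) := by
  have : Std.Irrefl (Relation.TransGen (IsEdge r d)) := ⟨fun v hv => by
    obtain ⟨γ, hne, hchain, hhead, hlast⟩ := exists_path_of_transGen_isEdge hv
    exact hnocirc ⟨γ, hne, hchain, hlast.trans hhead.symm⟩⟩
  exact Subrelation.wf Relation.TransGen.single (Finite.wellFounded_of_trans_of_irrefl _)

variable [Fintype E] [DecidableEq V]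

noncomputable def acyclicTrace (hwf : WellFounded (IsEdge r d)) : V → ℝ≥0 :=
  hwf.fix fun v T =>
    if ∃ e, r e = v then
      ∑ e ∈ (Finset.univ.filter fun e => r e = v).attach,
        T (d e.1) ⟨e.1, rfl, (Finset.mem_filter.mp e.2).2⟩
    else 1

variable (hwf : WellFounded (IsEdge r d))

theorem acyclicTrace_eq_sum {v : V} (hv : ∃ e, r e = v) :
    acyclicTrace hwf v = ∑ e ∈ Finset.univ.filter (fun e => r e = v), acyclicTrace hwf (d e) := by
  rw [acyclicTrace, hwf.fix_eq, if_pos hv]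
  exact Finset.sum_attach _ fun e => acyclicTrace hwf (d e)

theorem acyclicTrace_eq_one {v : V} (hv : ¬ ∃ e, r e = v) : acyclicTrace hwf v = 1 := by
  rw [acyclicTrace, hwf.fix_eq, if_neg hv]

theorem acyclicTrace_le (e : E) : acyclicTrace hwf (d e) ≤ acyclicTrace hwf (r e) := by
  rw [acyclicTrace_eq_sum hwf ⟨e, rfl⟩]
  exact Finset.single_le_sum (f := fun f => acyclicTrace hwf (d f)) (fun _ _ => zero_le)
    (Finset.mem_filter.mpr ⟨Finset.mem_univ e, rfl⟩)

theorem one_le_acyclicTrace (v : V) : 1 ≤ acyclicTrace hwf v := by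
  induction v using hwf.induction with
  | _ v ih =>
    by_cases hv : ∃ e, r e = v
    · obtain ⟨e, rfl⟩ := hv
      exact (ih (d e) ⟨e, rfl, rfl⟩).trans (acyclicTrace_le hwf e)
    · exact (acyclicTrace_eq_one hwf hv).ge

end

/-- a finite directed graph with no circuits admits a nonzero
graph trace. -/
theorem finite_acyclic_graph_has_trace {E V : Type*} [Fintype V] [Fintype E]
    [Nonempty V] [DecidableEq V]
    (r d : E → V)
    -- `F` has no circuits:
    (hnocirc : ¬ ∃ (γ : List E) (hne : γ ≠ []),
        List.Chain' (fun e f => d e = r f) γ ∧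
        d (γ.getLast hne) = r (γ.head hne)) :
    -- there is a nonzero graph trace:
    ∃ T : V → ℝ≥0,
      (∃ v, T v ≠ 0) ∧
      (∀ e : E, T (d e) ≤ T (r e)) ∧
      (∀ v : V, (∃ e, r e = v) →
        T v = ∑ e ∈ Finset.univ.filter (fun e => r e = v), T (d e)) := by
  have hwf := wellFounded_isEdge hnocirc
  refine ⟨acyclicTrace hwf, ?_, acyclicTrace_le hwf, fun v hv => acyclicTrace_eq_sum hwf hv⟩
  obtain ⟨v⟩ := ‹Nonempty V›
  exact ⟨v, (zero_lt_one.trans_le (one_le_acyclicTrace hwf v)).ne'⟩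
end
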